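/- arXiv:1502.01882 — 3 statements merged into one kernel-verified Lean document; each statement's English description precedes it below -/
import Mathlib

section
/- Let V be a 2n-dimensional real vector space with n ≥ 2, equipped with a nondegenerate alternating 2-form Ω (e.g. the fundamental form of a Hermitian structure). Then the linear map from 1-forms to 3-forms given by σ ↦ σ ∧ Ω is injective. -/
/-- On a real vector space `V` of dimension `2n`, `n ≥ 2`, with a
nondegenerate alternating 2-form `Ω`, the map `σ ↦ σ ∧ Ω` from 1-forms to 3-forms
is injective.  Injectivity is stated pointwise: if the 3-form
`(σ ∧ Ω)(x,y,z) = σ(x)Ω(y,z) - σ(y)Ω(x,z) + σ(z)Ω(x,y)` vanishes, then `σ = 0`. -/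
theorem wedge_with_nondegenerate_two_form_injective
    {V : Type*} [AddCommGroup V] [Module ℝ V] [FiniteDimensional ℝ V]
    (n : ℕ) (hn : 2 ≤ n) (hdim : Module.finrank ℝ V = 2 * n)
    (Ω : V →ₗ[ℝ] V →ₗ[ℝ] ℝ)
    (halt : ∀ v : V, Ω v v = 0)
    (hnd : ∀ u : V, (∀ v : V, Ω u v = 0) → u = 0) :
    ∀ σ : Module.Dual ℝ V,
      (∀ x y z : V, σ x * Ω y z - σ y * Ω x z + σ z * Ω x y = 0) → σ = 0 := by
  intro σ hσ
  by_contra hne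
  -- find x with σ x = 1
  obtain ⟨x₀, hx₀⟩ : ∃ x, σ x ≠ 0 := by
    by_contra h
    push_neg at h
    exact hne (LinearMap.ext h)
  set x : V := (σ x₀)⁻¹ • x₀ with hxdef
  have hx1 : σ x = 1 := by
    simp [hxdef, inv_mul_cancel₀ hx₀]
  -- Ω vanishes on ker σ
  have hker : ∀ y z : V, σ y = 0 → σ z = 0 → Ω y z = 0 := by
    intro y z hy hz
    have := hσ x y z
    rw [hx1, hy, hz] at this
    linarith
  -- the map u ↦ Ω u x on ker σ is injective
  set K := LinearMap.ker σ
  set g : K →ₗ[ℝ] ℝ := (Ω.flip x).comp K.subtype with hgdef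
  have hginj : Function.Injective g := by
    rw [← LinearMap.ker_eq_bot]
    ext u
    simp only [LinearMap.mem_ker, Submodule.mem_bot]
    constructor
    · intro hu
      have hux : Ω (u : V) x = 0 := hu
      have huker : σ (u : V) = 0 := u.2
      have : (u : V) = 0 := by
        apply hnd
        intro v
        have hdecomp : v = (v - σ v • x) + σ v • x := by abel
        have h1 : Ω (u : V) (v - σ v • x) = 0 := by
          apply hker _ _ huker
          simp [hx1]
        calc Ω (u : V) v = Ω (u : V) ((v - σ v • x) + σ v • x) := by rw [← hdecomp]
          _ = Ω (u : V) (v - σ v • x) + σ v * Ω (u : V) x := by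
              rw [map_add, map_smul]; rfl
          _ = 0 := by rw [h1, hux]; ring
      exact Subtype.ext this
    · intro hu; rw [hu]; simp
  -- dimension count
  have hrange : LinearMap.range σ = ⊤ := by
    rw [eq_top_iff]
    intro c _
    exact ⟨c • x, by simp [hx1]⟩
  have hkerdim : Module.finrank ℝ K + 1 = 2 * n := by
    have := LinearMap.finrank_range_add_finrank_ker σ
    rw [hrange, hdim] at this
    simpa [Module.finrank_self, add_comm] using this
  have hle : Module.finrank ℝ K ≤ Module.finrank ℝ ℝ :=
    LinearMap.finrank_le_finrank_of_injective hginj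
  rw [Module.finrank_self] at hle
  omega
end

section
/- Let (M,g,J) be a locally conformally Kähler manifold of real dimension 2n > 4 with Lee form θ, carrying a unit-length parallel vector field V. Set a := θ(V). Then there exists a smooth function f on M such that da + (1/2)aθ = f·V♭, i.e. the 1-form da + (1/2)aθ is pointwise proportional to the dual 1-form of V. -/
/-!
Write `a = θ(V)`, `η = (JV)♭` and `Ω = g(J·, ·)`. As `V` is parallel, `V♭` is closed, and the lcK
formula for `∇J` gives `dη = ½ (θ∘J ∧ V♭ + θ ∧ η) − a Ω`. Differentiating once more, using
`dθ = 0` and `dΩ = θ ∧ Ω`, and evaluating on `V^⊥`, where `V♭` vanishes, `d(dη) = 0` becomes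
`(da + ½ a θ) ∧ Ω = 0` on `V^⊥`. Since `dim V^⊥ ≥ 5`, wedging with `Ω` is injective there, so
`da + ½ a θ` vanishes on `V^⊥`: it is a multiple of `V♭`.
-/

/-- Levi-Civita connection of a metric tensor on a chart. -/
def IsLeviCivita {E : Type*} [NormedAddCommGroup E] [NormedSpace ℝ E]
    (g : E → E →L[ℝ] E →L[ℝ] ℝ) (nab : (E → E) → (E → E) → E → E) : Prop :=
  (∀ X Y Z : E → E, Differentiable ℝ Y → Differentiable ℝ Z → ∀ x : E,
      fderiv ℝ (fun y => g y (Y y) (Z y)) x (X x)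
        = g x (nab X Y x) (Z x) + g x (Y x) (nab X Z x)) ∧
  (∀ X Y : E → E, Differentiable ℝ X → Differentiable ℝ Y → ∀ x : E,
      nab X Y x - nab Y X x = fderiv ℝ Y x (X x) - fderiv ℝ X x (Y x))

open MeasureTheory Filter Topology Asymptotics

section Stokes

variable {E : Type*} [NormedAddCommGroup E] [NormedSpace ℝ E]

noncomputable def segmentIntegral (P : E → ℝ) (x a : E) (δ : ℝ) : ℝ :=
  ∫ s in (0 : ℝ)..δ, P (x + s • a)

noncomputable def squareIntegral (S : E → ℝ) (x a b : E) (δ : ℝ) : ℝ :=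
  ∫ s in (0 : ℝ)..δ, ∫ t in (0 : ℝ)..δ, S (x + s • a + t • b)

/-- Green's theorem on the parallelogram `x + [0, δ] a + [0, δ] b`. -/
theorem squareIntegral_eq_of_fderiv_sub {P Q S : E → ℝ} {a b : E} (hP : Differentiable ℝ P)
    (hQ : Differentiable ℝ Q) (hS : ∀ y, fderiv ℝ P y a - fderiv ℝ Q y b = S y)
    (hSc : Continuous S) (x : E) (δ : ℝ) :
    squareIntegral S x a b δ = segmentIntegral P (x + δ • a) b δ - segmentIntegral P x b δ
      - segmentIntegral Q (x + δ • b) a δ + segmentIntegral Q x a δ := by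
  let L : ℝ × ℝ →L[ℝ] E :=
    (ContinuousLinearMap.fst ℝ ℝ ℝ).smulRight a + (ContinuousLinearMap.snd ℝ ℝ ℝ).smulRight b
  have hL : ∀ p : ℝ × ℝ, x + L p = x + p.1 • a + p.2 • b := fun p => (add_assoc _ _ _).symm
  have hφ : ∀ p, HasFDerivAt (fun p => x + L p) L p := fun p => L.hasFDerivAt.const_add x
  have hφc : Continuous fun p => x + L p := by fun_prop
  have hdiv : ∀ p : ℝ × ℝ, (fderiv ℝ P (x + L p)).comp L (1, 0)
      + (-(fderiv ℝ Q (x + L p)).comp L) (0, 1) = S (x + L p) := by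
    intro p
    simp [L, ← hS, sub_eq_add_neg]
  have green := integral2_divergence_prod_of_hasFDerivAt_off_countable
    (fun p => P (x + L p)) (fun p => -Q (x + L p))
    (fun p => (fderiv ℝ P (x + L p)).comp L) (fun p => -(fderiv ℝ Q (x + L p)).comp L)
    0 0 δ δ ∅ Set.countable_empty (hP.continuous.comp hφc).continuousOn
    (hQ.continuous.comp hφc).neg.continuousOn
    (fun p _ => (hP _).hasFDerivAt.comp p (hφ p))
    (fun p _ => ((hQ _).hasFDerivAt.comp p (hφ p)).neg)
    (by
      simp_rw [hdiv]
      exact (hSc.comp (by fun_prop)).continuousOn.integrableOn_compact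
        (isCompact_uIcc.prod isCompact_uIcc))
  simp only [hdiv] at green
  simp only [hL, intervalIntegral.integral_neg, zero_smul, add_zero,
    add_right_comm x _ (δ • b)] at green
  simp only [squareIntegral, segmentIntegral, green]
  ring

theorem cube_flux_eq_zero {η : E → E →L[ℝ] ℝ} {σ : E → E → E → ℝ} (hη : Differentiable ℝ η)
    (hσ : ∀ c d, Continuous fun y => σ y c d)
    (hdη : ∀ y c d, fderiv ℝ (fun y => η y d) y c - fderiv ℝ (fun y => η y c) y d = σ y c d)
    (x u w z : E) (δ : ℝ) :
    (squareIntegral (σ · w z) (x + δ • u) w z δ - squareIntegral (σ · w z) x w z δ)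
      + (squareIntegral (σ · z u) (x + δ • w) z u δ - squareIntegral (σ · z u) x z u δ)
      + (squareIntegral (σ · u w) (x + δ • z) u w δ - squareIntegral (σ · u w) x u w δ) = 0 := by
  have green : ∀ y a b, squareIntegral (σ · a b) y a b δ = segmentIntegral (η · b) (y + δ • a) b δ
      - segmentIntegral (η · b) y b δ - segmentIntegral (η · a) (y + δ • b) a δ
      + segmentIntegral (η · a) y a δ := fun y a b =>
    squareIntegral_eq_of_fderiv_sub (hη.clm_apply (differentiable_const b))
      (hη.clm_apply (differentiable_const a)) (hdη · a b) (hσ a b) y δ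
  simp only [green]
  rw [add_right_comm x (δ • w) (δ • u), add_right_comm x (δ • z) (δ • u),
    add_right_comm x (δ • z) (δ • w)]
  ring

theorem abs_sub_sub_apply_sub_le {S : E → ℝ} {L : E →L[ℝ] ℝ} {s : Set E} {x y₀ y₁ : E} {ε : ℝ}
    (hR : ∀ y ∈ s, |S y - S x - L (y - x)| ≤ ε * ‖y - x‖) (h₀ : y₀ ∈ s) (h₁ : y₁ ∈ s) :
    |S y₁ - S y₀ - L (y₁ - y₀)| ≤ ε * (‖y₁ - x‖ + ‖y₀ - x‖) := by
  have hsplit : S y₁ - S y₀ - L (y₁ - y₀)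
      = (S y₁ - S x - L (y₁ - x)) - (S y₀ - S x - L (y₀ - x)) := by
    rw [← sub_sub_sub_cancel_right y₁ y₀ x, map_sub]
    ring
  rw [hsplit, mul_add]
  exact (abs_sub _ _).trans (add_le_add (hR y₁ h₁) (hR y₀ h₀))

theorem norm_smul_add_smul_add_smul_le {r s t δ : ℝ} (hr : r ∈ Set.Icc 0 δ)
    (hs : s ∈ Set.Icc 0 δ) (ht : t ∈ Set.Icc 0 δ) (d a b : E) :
    ‖r • d + s • a + t • b‖ ≤ δ * (‖d‖ + ‖a‖ + ‖b‖) := by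
  have key : ∀ (q : ℝ) (v : E), q ∈ Set.Icc 0 δ → ‖q • v‖ ≤ δ * ‖v‖ := fun q v hq => by
    rw [norm_smul, Real.norm_of_nonneg hq.1]
    exact mul_le_mul_of_nonneg_right hq.2 (norm_nonneg v)
  calc ‖r • d + s • a + t • b‖ ≤ ‖r • d‖ + ‖s • a‖ + ‖t • b‖ := norm_add₃_le
    _ ≤ δ * ‖d‖ + δ * ‖a‖ + δ * ‖b‖ := by gcongr <;> apply key <;> assumption
    _ = δ * (‖d‖ + ‖a‖ + ‖b‖) := by ring

theorem integral_integral_sub_sub_const {F G : ℝ → ℝ → ℝ} (hF : Continuous (Function.uncurry F))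
    (hG : Continuous (Function.uncurry G)) (k δ : ℝ) :
    (∫ s in (0 : ℝ)..δ, ∫ t in (0 : ℝ)..δ, F s t) - (∫ s in (0 : ℝ)..δ, ∫ t in (0 : ℝ)..δ, G s t)
      - δ ^ 2 * k = ∫ s in (0 : ℝ)..δ, ∫ t in (0 : ℝ)..δ, (F s t - G s t - k) := by
  have hFt : ∀ s, Continuous (F s) := fun s => hF.comp (Continuous.prodMk_right s)
  have hGt : ∀ s, Continuous (G s) := fun s => hG.comp (Continuous.prodMk_right s)
  have hFs := intervalIntegral.continuous_parametric_intervalIntegral_of_continuous'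
    (μ := volume) hF 0 δ
  have hGs := intervalIntegral.continuous_parametric_intervalIntegral_of_continuous'
    (μ := volume) hG 0 δ
  have inner : ∀ s, ∫ t in (0 : ℝ)..δ, (F s t - G s t - k)
      = (∫ t in (0 : ℝ)..δ, F s t) - (∫ t in (0 : ℝ)..δ, G s t) - δ * k := fun s => by
    rw [intervalIntegral.integral_sub (((hFt s).fun_sub (hGt s)).intervalIntegrable 0 δ)
      intervalIntegrable_const, intervalIntegral.integral_sub ((hFt s).intervalIntegrable 0 δ)
      ((hGt s).intervalIntegrable 0 δ)]
    simp
  simp only [inner]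
  rw [intervalIntegral.integral_sub ((hFs.fun_sub hGs).intervalIntegrable 0 δ)
    intervalIntegrable_const, intervalIntegral.integral_sub (hFs.intervalIntegrable 0 δ)
    (hGs.intervalIntegrable 0 δ)]
  simp only [intervalIntegral.integral_const_mul, intervalIntegral.integral_const, sub_zero,
    smul_eq_mul, sub_right_inj]
  ring

theorem squareIntegral_sub_sub_isLittleO {S : E → ℝ} (hS : Continuous S) {x : E}
    (hSx : DifferentiableAt ℝ S x) (d a b : E) :
    (fun δ : ℝ => squareIntegral S (x + δ • d) a b δ - squareIntegral S x a b δ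
      - δ ^ 3 * fderiv ℝ S x d) =o[𝓝[>] 0] fun δ => δ ^ 3 := by
  set M := ‖d‖ + ‖a‖ + ‖b‖ + 1
  have hM : 0 < M := by positivity
  refine isLittleO_iff.2 fun c hc => ?_
  obtain ⟨ρ, hρ, hR⟩ := Metric.eventually_nhds_iff.1
    (isLittleO_iff.1 hSx.hasFDerivAt.isLittleO (show 0 < c / (2 * M) by positivity))
  filter_upwards [Ioo_mem_nhdsGT (div_pos hρ hM)] with δ ⟨hδ, hδρ⟩
  have hnear : ∀ r ∈ Set.Icc 0 δ, ∀ s ∈ Set.Icc 0 δ, ∀ t ∈ Set.Icc 0 δ,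
      x + r • d + s • a + t • b ∈ Metric.ball x ρ ∧ ‖x + r • d + s • a + t • b - x‖ ≤ δ * M := by
    intro r hr s hs t ht
    have hle : ‖x + r • d + s • a + t • b - x‖ ≤ δ * M := by
      rw [show x + r • d + s • a + t • b - x = r • d + s • a + t • b by abel]
      exact (norm_smul_add_smul_add_smul_le hr hs ht d a b).trans (by gcongr; linarith)
    refine ⟨?_, hle⟩
    rw [Metric.mem_ball, dist_eq_norm]
    exact hle.trans_lt (by rwa [lt_div_iff₀ hM] at hδρ)
  have hIcc : Set.uIoc 0 δ ⊆ Set.Icc 0 δ := by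
    rw [Set.uIoc_of_le hδ.le]
    exact Set.Ioc_subset_Icc_self
  have hδIcc : δ ∈ Set.Icc 0 δ := ⟨hδ.le, le_rfl⟩
  have h0Icc : (0 : ℝ) ∈ Set.Icc 0 δ := ⟨le_rfl, hδ.le⟩
  have hpoint : ∀ s ∈ Set.Icc 0 δ, ∀ t ∈ Set.Icc 0 δ,
      ‖S (x + δ • d + s • a + t • b) - S (x + s • a + t • b) - δ * fderiv ℝ S x d‖ ≤ c * δ := by
    intro s hs t ht
    obtain ⟨h₁, hn₁⟩ := hnear δ hδIcc s hs t ht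
    obtain ⟨h₀, hn₀⟩ := hnear 0 h0Icc s hs t ht
    rw [zero_smul, add_zero] at h₀ hn₀
    have hdiff : x + δ • d + s • a + t • b - (x + s • a + t • b) = δ • d := by abel
    have := abs_sub_sub_apply_sub_le (L := fderiv ℝ S x) (fun y hy => by
      simpa only [Real.norm_eq_abs] using hR (Metric.mem_ball.1 hy)) h₀ h₁
    rw [hdiff, map_smul, smul_eq_mul] at this
    rw [Real.norm_eq_abs]
    calc _ ≤ c / (2 * M) * (‖x + δ • d + s • a + t • b - x‖ + ‖x + s • a + t • b - x‖) := this
      _ ≤ c / (2 * M) * (δ * M + δ * M) := by gcongr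
      _ = c * δ := by field_simp; ring
  rw [squareIntegral, squareIntegral, show δ ^ 3 * fderiv ℝ S x d = δ ^ 2 * (δ * fderiv ℝ S x d)
    by ring, integral_integral_sub_sub_const (by fun_prop) (by fun_prop)]
  calc _ ≤ c * δ * |δ - 0| * |δ - 0| :=
        intervalIntegral.norm_integral_le_of_norm_le_const fun s hs =>
          intervalIntegral.norm_integral_le_of_norm_le_const fun t ht =>
            hpoint s (hIcc hs) t (hIcc ht)
    _ = c * ‖δ ^ 3‖ := by
        rw [sub_zero, abs_of_pos hδ, Real.norm_of_nonneg (by positivity)]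
        ring

/-- `d (d η) = 0` for a differentiable 1-form `η` whose exterior derivative `σ` is differentiable,
although `η` need not be twice differentiable: the flux of `σ` through the boundary of a small
cube vanishes by Green's theorem on its faces, while to third order in the edge length it is the
cyclic sum below. -/
theorem cyclic_fderiv_eq_zero_of_fderiv_sub {η : E → E →L[ℝ] ℝ} {σ : E → E → E → ℝ}
    (hη : Differentiable ℝ η) (hσ : ∀ c d, Differentiable ℝ fun y => σ y c d)
    (hdη : ∀ y c d, fderiv ℝ (fun y => η y d) y c - fderiv ℝ (fun y => η y c) y d = σ y c d)
    (x u w z : E) :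
    fderiv ℝ (σ · w z) x u + fderiv ℝ (σ · z u) x w + fderiv ℝ (σ · u w) x z = 0 := by
  set c := fderiv ℝ (σ · w z) x u + fderiv ℝ (σ · z u) x w + fderiv ℝ (σ · u w) x z
  have hflux := ((squareIntegral_sub_sub_isLittleO (hσ w z).continuous (hσ w z x) u w z).add
    (squareIntegral_sub_sub_isLittleO (hσ z u).continuous (hσ z u x) w z u)).add
    (squareIntegral_sub_sub_isLittleO (hσ u w).continuous (hσ u w x) z u w)
  have hc : (fun δ : ℝ => δ ^ 3 * c) =o[𝓝[>] 0] fun δ => δ ^ 3 := by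
    refine hflux.neg_left.congr_left fun δ => ?_
    linear_combination
      (-1 : ℝ) * cube_flux_eq_zero hη (fun c d => (hσ c d).continuous) hdη x u w z δ
  refine tendsto_nhds_unique tendsto_const_nhds (hc.tendsto_div_nhds_zero.congr' ?_)
  filter_upwards [self_mem_nhdsWithin] with δ (hδ : 0 < δ)
  field_simp

end Stokes

section LinearAlgebra

theorem exists_ne_zero_forall_apply_eq_zero {K V : Type*} [Field K] [AddCommGroup V] [Module K V]
    [FiniteDimensional K V] {k : ℕ} (f : Fin k → V →ₗ[K] K) (hk : k < Module.finrank K V) :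
    ∃ u ≠ 0, ∀ i, f i u = 0 := by
  obtain ⟨u, hu, hu0⟩ := Submodule.exists_mem_ne_zero_of_ne_bot
    (LinearMap.ker_ne_bot_of_finrank_lt (f := LinearMap.pi f) (by simpa using hk))
  exact ⟨u, hu0, fun i => congrFun (LinearMap.mem_ker.1 hu) i⟩

variable {E : Type*} [NormedAddCommGroup E] [NormedSpace ℝ E] {B : E →L[ℝ] E →L[ℝ] ℝ}
  {j : E →L[ℝ] E}

theorem apply_left_eq_neg_apply_right (hj : ∀ v, j (j v) = -v)
    (hB : ∀ u v, B (j u) (j v) = B u v) (c d : E) : B (j c) d = -B c (j d) := by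
  rw [← hB c (j d), hj, map_neg, neg_neg]

theorem apply_map_eq_neg_apply_map (hsymm : ∀ u v, B u v = B v u) (hj : ∀ v, j (j v) = -v)
    (hB : ∀ u v, B (j u) (j v) = B u v) (c d : E) : B c (j d) = -B d (j c) := by
  rw [← hsymm, apply_left_eq_neg_apply_right hj hB]

/-- The cyclic sum in `hwedge` is `(α ∧ Ω)(u, w, z)` for `Ω = B (j ·) ·`. At `(p, u, j u)`, with
`u ≠ 0` orthogonal to `v`, `j v`, `p` and `j p`, it reduces to `α p * B u u`. -/
theorem eq_mul_of_wedge_eq_zero [FiniteDimensional ℝ E] (hdim : 4 < Module.finrank ℝ E)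
    (hsymm : ∀ u v, B u v = B v u) (hpos : ∀ u, u ≠ 0 → 0 < B u u) (hj : ∀ v, j (j v) = -v)
    (hB : ∀ u v, B (j u) (j v) = B u v) {v : E} (hv : B v v = 1) (α : E →L[ℝ] ℝ)
    (hwedge : ∀ u w z, B v u = 0 → B v w = 0 → B v z = 0 →
      α u * B (j w) z + α w * B (j z) u + α z * B (j u) w = 0) (w : E) :
    α w = α v * B v w := by
  have hperp : ∀ p, B v p = 0 → α p = 0 := by
    intro p hp
    obtain ⟨u, hu0, hu⟩ := exists_ne_zero_forall_apply_eq_zero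
      ![(B v).toLinearMap, (B (j v)).toLinearMap, (B p).toLinearMap, (B (j p)).toLinearMap]
      hdim
    simp only [Fin.forall_fin_succ, Matrix.cons_val_zero, Matrix.cons_val_succ,
      Matrix.cons_val_fin_one, ContinuousLinearMap.coe_coe, forall_const] at hu
    obtain ⟨hvu, hjvu, hpu, hjpu⟩ := hu
    have hvju : B v (j u) = 0 := by
      simpa [apply_left_eq_neg_apply_right hj hB] using hjvu
    have key := hwedge p u (j u) hp hvu hvju
    rw [hB, hj, map_neg, neg_apply, hsymm u p, hpu, hjpu] at key
    simp only [neg_zero, mul_zero, add_zero] at key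
    exact (mul_eq_zero.1 key).resolve_right (hpos u hu0).ne'
  have hp : B v (w - B v w • v) = 0 := by simp [hv]
  have := hperp _ hp
  rw [map_sub, map_smul, smul_eq_mul] at this
  linarith

end LinearAlgebra

section LCK

def IsLCKNablaJ {E : Type*} [NormedAddCommGroup E] [NormedSpace ℝ E]
    (g : E → E →L[ℝ] E →L[ℝ] ℝ) (J : E → E →L[ℝ] E) (nab : (E → E) → (E → E) → E → E)
    (θ : E → E →L[ℝ] ℝ) (θs : E → E) : Prop :=
  ∀ X Y : E → E, Differentiable ℝ X → Differentiable ℝ Y → ∀ x : E,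
    nab X (fun y => J y (Y y)) x - J x (nab X Y x) = (1 / 2 : ℝ) •
      (g x (X x) (Y x) • J x (θs x) + θ x (J x (Y x)) • X x
        + g x (J x (X x)) (Y x) • θs x - θ x (Y x) • J x (X x))

variable {E : Type*} [NormedAddCommGroup E] [NormedSpace ℝ E] {g : E → E →L[ℝ] E →L[ℝ] ℝ}
  {nab : (E → E) → (E → E) → E → E} {J : E → E →L[ℝ] E} {θ : E → E →L[ℝ] ℝ} {θs V : E → E}

theorem IsLeviCivita.nab_const_comm (hLC : IsLeviCivita g nab) (x c d : E) :
    nab (fun _ => c) (fun _ => d) x = nab (fun _ => d) (fun _ => c) x := by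
  simpa [sub_eq_zero] using
    hLC.2 (fun _ => c) (fun _ => d) (differentiable_const c) (differentiable_const d) x

theorem IsLeviCivita.fderiv_flat_comm_of_parallel (hLC : IsLeviCivita g nab)
    (hV : Differentiable ℝ V) (hVpar : ∀ X x, nab X V x = 0) (x m c : E) :
    fderiv ℝ (fun y => g y (V y) c) x m = fderiv ℝ (fun y => g y (V y) m) x c := by
  have h₁ := hLC.1 (fun _ => m) V (fun _ => c) hV (differentiable_const c) x
  have h₂ := hLC.1 (fun _ => c) V (fun _ => m) hV (differentiable_const m) x
  simp only [hVpar, map_zero, zero_apply, zero_add] at h₁ h₂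
  rw [h₁, h₂, hLC.nab_const_comm]

/-- `d (JV)♭` for parallel `V`: `½ (θ∘J ∧ V♭ + θ ∧ (JV)♭) − θ(V) Ω`, with `Ω = g(J·, ·)`. -/
noncomputable def lckTwoForm (g : E → E →L[ℝ] E →L[ℝ] ℝ) (J : E → E →L[ℝ] E)
    (θ : E → E →L[ℝ] ℝ) (V : E → E) (y c d : E) : ℝ :=
  2⁻¹ * (g y (V y) d * θ y (J y c) - g y (V y) c * θ y (J y d)
    + g y (J y (V y)) d * θ y c - g y (J y (V y)) c * θ y d) - θ y (V y) * g y (J y c) d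

theorem IsLeviCivita.fderiv_J_flat_sub_eq_lckTwoForm (hLC : IsLeviCivita g nab)
    (hsymm : ∀ x u v, g x u v = g x v u) (hJ2 : ∀ x v, J x (J x v) = -v)
    (hherm : ∀ x u v, g x (J x u) (J x v) = g x u v) (hθs : ∀ x v, g x (θs x) v = θ x v)
    (hlck : IsLCKNablaJ g J nab θ θs)
    (hJ : Differentiable ℝ J) (hV : Differentiable ℝ V) (hVpar : ∀ X x, nab X V x = 0)
    (y c d : E) :
    fderiv ℝ (fun y => g y (J y (V y)) d) y c - fderiv ℝ (fun y => g y (J y (V y)) c) y d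
      = lckTwoForm g J θ V y c d := by
  have hJV : Differentiable ℝ fun y => J y (V y) := hJ.clm_apply hV
  have hc := hlck (fun _ => c) V (differentiable_const c) hV y
  have hd := hlck (fun _ => d) V (differentiable_const d) hV y
  simp only [hVpar, map_zero, sub_zero] at hc hd
  rw [hLC.1 (fun _ => c) _ (fun _ => d) hJV (differentiable_const d) y,
    hLC.1 (fun _ => d) _ (fun _ => c) hJV (differentiable_const c) y, hc, hd,
    hLC.nab_const_comm y c d]
  simp only [lckTwoForm, map_add, map_sub, map_smul, add_apply,
    sub_apply, smul_apply, smul_eq_mul,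
    apply_left_eq_neg_apply_right (hJ2 y) (hherm y), hθs]
  have hΩ := apply_map_eq_neg_apply_map (hsymm y) (hJ2 y) (hherm y)
  rw [hsymm y c (V y), hsymm y d (V y), hsymm y c d, hΩ c, hΩ d, hΩ c d]
  ring

theorem IsLeviCivita.cyclic_fderiv_fundamentalForm (hLC : IsLeviCivita g nab)
    (hsymm : ∀ x u v, g x u v = g x v u) (hJ2 : ∀ x v, J x (J x v) = -v)
    (hherm : ∀ x u v, g x (J x u) (J x v) = g x u v) (hθs : ∀ x v, g x (θs x) v = θ x v)
    (hlck : IsLCKNablaJ g J nab θ θs)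
    (hJ : Differentiable ℝ J) (x u w z : E) :
    fderiv ℝ (fun y => g y (J y w) z) x u + fderiv ℝ (fun y => g y (J y z) u) x w
        + fderiv ℝ (fun y => g y (J y u) w) x z
      = θ x u * g x (J x w) z + θ x w * g x (J x z) u + θ x z * g x (J x u) w := by
  have hnabJ : ∀ c d, nab (fun _ => c) (fun y => J y d) x = J x (nab (fun _ => c) (fun _ => d) x)
      + (1 / 2 : ℝ) • (g x c d • J x (θs x) + θ x (J x d) • c + g x (J x c) d • θs x
        - θ x d • J x c) := fun c d =>
    eq_add_of_sub_eq' (hlck _ _ (differentiable_const c) (differentiable_const d) x)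
  have hmetric : ∀ c d m, fderiv ℝ (fun y => g y (J y d) m) x c
      = g x (nab (fun _ => c) (fun y => J y d) x) m
        + g x (J x d) (nab (fun _ => c) (fun _ => m) x) := fun c d m =>
    hLC.1 (fun _ => c) _ _ (hJ.clm_apply (differentiable_const d)) (differentiable_const m) x
  rw [hmetric, hmetric, hmetric, hnabJ, hnabJ, hnabJ, hLC.nab_const_comm x w u,
    hLC.nab_const_comm x z w, hLC.nab_const_comm x u z]
  simp only [map_add, map_sub, map_smul, add_apply, sub_apply, smul_apply, smul_eq_mul,
    apply_left_eq_neg_apply_right (hJ2 x) (hherm x), hθs]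
  have hΩ := apply_map_eq_neg_apply_map (hsymm x) (hJ2 x) (hherm x)
  rw [hΩ w (nab _ _ x), hΩ z (nab _ _ x), hΩ u (nab _ _ x), hΩ u z, hΩ w u, hΩ z w, hsymm x w u,
    hsymm x z w, hsymm x u z]
  ring

theorem hasFDerivAt_lckTwoForm (hg : Differentiable ℝ g) (hJ : Differentiable ℝ J)
    (hθ : Differentiable ℝ θ) (hV : Differentiable ℝ V) (x c d : E) :
    HasFDerivAt (fun y => lckTwoForm g J θ V y c d)
      ((2⁻¹ : ℝ) • (g x (V x) d • fderiv ℝ (fun y => θ y (J y c)) x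
          + θ x (J x c) • fderiv ℝ (fun y => g y (V y) d) x
        - (g x (V x) c • fderiv ℝ (fun y => θ y (J y d)) x
          + θ x (J x d) • fderiv ℝ (fun y => g y (V y) c) x)
        + (g x (J x (V x)) d • fderiv ℝ (fun y => θ y c) x
          + θ x c • fderiv ℝ (fun y => g y (J y (V y)) d) x)
        - (g x (J x (V x)) c • fderiv ℝ (fun y => θ y d) x
          + θ x d • fderiv ℝ (fun y => g y (J y (V y)) c) x))
        - (θ x (V x) • fderiv ℝ (fun y => g y (J y c) d) x
          + g x (J x c) d • fderiv ℝ (fun y => θ y (V y)) x)) x := by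
  have hV' : ∀ c, HasFDerivAt (fun y => g y (V y) c) (fderiv ℝ (fun y => g y (V y) c) x) x :=
    fun c => ((hg.clm_apply hV).clm_apply (differentiable_const c) x).hasFDerivAt
  have hJV' : ∀ c, HasFDerivAt (fun y => g y (J y (V y)) c)
      (fderiv ℝ (fun y => g y (J y (V y)) c) x) x :=
    fun c => ((hg.clm_apply (hJ.clm_apply hV)).clm_apply (differentiable_const c) x).hasFDerivAt
  have hθ' : ∀ c, HasFDerivAt (fun y => θ y c) (fderiv ℝ (fun y => θ y c) x) x :=
    fun c => (hθ.clm_apply (differentiable_const c) x).hasFDerivAt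
  have hθJ' : ∀ c, HasFDerivAt (fun y => θ y (J y c)) (fderiv ℝ (fun y => θ y (J y c)) x) x :=
    fun c => (hθ.clm_apply (hJ.clm_apply (differentiable_const c)) x).hasFDerivAt
  have ha' : HasFDerivAt (fun y => θ y (V y)) (fderiv ℝ (fun y => θ y (V y)) x) x :=
    (hθ.clm_apply hV x).hasFDerivAt
  have hΩ' : HasFDerivAt (fun y => g y (J y c) d) (fderiv ℝ (fun y => g y (J y c) d) x) x :=
    ((hg.clm_apply (hJ.clm_apply (differentiable_const c))).clm_apply
      (differentiable_const d) x).hasFDerivAt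
  exact (((((hV' d).mul (hθJ' c)).sub ((hV' c).mul (hθJ' d))).add ((hJV' d).mul (hθ' c))).sub
    ((hJV' c).mul (hθ' d))).const_mul 2⁻¹ |>.sub (ha'.mul hΩ')

/-- `d (d (JV)♭) = 0`, evaluated on `V^⊥`. -/
theorem IsLeviCivita.wedge_fundamentalForm_eq_zero (hLC : IsLeviCivita g nab)
    (hg : Differentiable ℝ g) (hsymm : ∀ x u v, g x u v = g x v u)
    (hJ : Differentiable ℝ J) (hJ2 : ∀ x v, J x (J x v) = -v)
    (hherm : ∀ x u v, g x (J x u) (J x v) = g x u v) (hθ : Differentiable ℝ θ)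
    (hθclosed : ∀ x u v : E, fderiv ℝ (fun y => θ y v) x u = fderiv ℝ (fun y => θ y u) x v)
    (hθs : ∀ x v, g x (θs x) v = θ x v)
    (hlck : IsLCKNablaJ g J nab θ θs)
    (hV : Differentiable ℝ V) (hVpar : ∀ X x, nab X V x = 0) {x u w z : E}
    (hu : g x (V x) u = 0) (hw : g x (V x) w = 0) (hz : g x (V x) z = 0) :
    let α := fderiv ℝ (fun y => θ y (V y)) x + (θ x (V x) / 2) • θ x
    α u * g x (J x w) z + α w * g x (J x z) u + α z * g x (J x u) w = 0 := by
  have hdη := hLC.fderiv_J_flat_sub_eq_lckTwoForm hsymm hJ2 hherm hθs hlck hJ hV hVpar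
  have hσ := hasFDerivAt_lckTwoForm hg hJ hθ hV
  have hdd := cyclic_fderiv_eq_zero_of_fderiv_sub (hg.clm_apply (hJ.clm_apply hV))
    (fun c d y => (hσ y c d).differentiableAt) hdη x u w z
  simp only [(hσ _ _ _).fderiv, add_apply, sub_apply, smul_apply, smul_eq_mul, hu, hw, hz] at hdd
  have hzu := hdη x z u
  have huw := hdη x u w
  have hwz := hdη x w z
  simp only [lckTwoForm, hu, hw, hz] at hzu huw hwz
  have hVflat := hLC.fderiv_flat_comm_of_parallel hV hVpar x
  have hdΩ := hLC.cyclic_fderiv_fundamentalForm hsymm hJ2 hherm hθs hlck hJ x u w z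
  simp only [add_apply, smul_apply, smul_eq_mul]
  linear_combination (-1 : ℝ) * hdd
    + 2⁻¹ * θ x (J x w) * hVflat u z + 2⁻¹ * θ x (J x z) * hVflat w u
    + 2⁻¹ * θ x (J x u) * hVflat z w
    + 2⁻¹ * g x (J x (V x)) z * hθclosed x u w + 2⁻¹ * g x (J x (V x)) u * hθclosed x w z
    + 2⁻¹ * g x (J x (V x)) w * hθclosed x z u
    - 2⁻¹ * θ x w * hzu - 2⁻¹ * θ x z * huw - 2⁻¹ * θ x u * hwz - θ x (V x) * hdΩ

end LCK

/-- on a locally conformally Kähler manifold of real dimension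
`2n > 4` — Hermitian structure `(g,J)` with closed Lee form `θ` satisfying the lcK
identity `(∇_X J)Y = ½(g(X,Y)Jθ♯ + θ(JY)X + g(JX,Y)θ♯ − θ(Y)JX)` — carrying a
unit-length parallel vector field `V`, setting `a := θ(V)`, there is a function `f`
with `da + ½·a·θ = f·V♭`. -/
theorem lck_parallel_field_da_proportional_to_V
    {E : Type*} [NormedAddCommGroup E] [NormedSpace ℝ E] [FiniteDimensional ℝ E]
    (n : ℕ) (hn : 2 < n) (hdim : Module.finrank ℝ E = 2 * n)
    (g : E → E →L[ℝ] E →L[ℝ] ℝ) (hgdiff : Differentiable ℝ g)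
    (hsymm : ∀ x u v, g x u v = g x v u)
    (hpos : ∀ x u, u ≠ 0 → 0 < g x u u)
    (J : E → E →L[ℝ] E) (hJdiff : Differentiable ℝ J)
    (hJ2 : ∀ x v, J x (J x v) = -v)
    (hherm : ∀ x u v, g x (J x u) (J x v) = g x u v)
    (nab : (E → E) → (E → E) → E → E) (hLC : IsLeviCivita g nab)
    (θ : E → E →L[ℝ] ℝ) (hθdiff : Differentiable ℝ θ)
    (hθclosed : ∀ x u v : E,
      fderiv ℝ (fun y => θ y v) x u = fderiv ℝ (fun y => θ y u) x v)
    (θs : E → E) (hθs : ∀ x v, g x (θs x) v = θ x v)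
    (hlck : ∀ X Y : E → E, Differentiable ℝ X → Differentiable ℝ Y → ∀ x : E,
      nab X (fun y => J y (Y y)) x - J x (nab X Y x) = (1 / 2 : ℝ) •
        (g x (X x) (Y x) • J x (θs x) + θ x (J x (Y x)) • X x
          + g x (J x (X x)) (Y x) • θs x - θ x (Y x) • J x (X x)))
    (V : E → E) (hVdiff : Differentiable ℝ V)
    (hVpar : ∀ X : E → E, ∀ x : E, nab X V x = 0)
    (hVunit : ∀ x, g x (V x) (V x) = 1) :
    ∃ f : E → ℝ, ∀ x w : E,
      fderiv ℝ (fun y => θ y (V y)) x w + (1 / 2 : ℝ) * (θ x (V x) * θ x w)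
        = f x * g x (V x) w := by
  let α : E → E →L[ℝ] ℝ := fun x => fderiv ℝ (fun y => θ y (V y)) x + (θ x (V x) / 2) • θ x
  refine ⟨fun x => α x (V x), fun x w => ?_⟩
  have hα := eq_mul_of_wedge_eq_zero (by omega) (hsymm x) (hpos x) (hJ2 x) (hherm x) (hVunit x)
    (α x) (fun _ _ _ hu hw hz => hLC.wedge_fundamentalForm_eq_zero hgdiff hsymm hJdiff hJ2 hherm
      hθdiff hθclosed hθs hlck hVdiff hVpar hu hw hz) w
  simp only [α, add_apply, smul_apply, smul_eq_mul] at hα ⊢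
  linear_combination hα
end

section
/- Let (M,g,J) be an lcK manifold with a unit parallel vector field V and Lee form θ, and suppose θ(V) = 0 and θ = b·(JV)♭ for a function b. Then ∇_X(JV) = (b/2)(X − g(X,V)V − g(X,JV)JV) for all X; in particular the 1-form (JV)♭ is closed and the Lie derivative satisfies L_{JV} g = b(g − V♭⊗V♭ − (JV)♭⊗(JV)♭), so JV is a conformal Killing field on the distribution orthogonal to V and JV. -/
/-- on an lcK manifold (Hermitian structure `(g,J)` with closed Lee
form `θ` satisfying the lcK identity for `∇J`) with unit parallel vector field `V`,
if `θ(V) = 0` and `θ = b·(JV)♭`, then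
`∇_X(JV) = (b/2)(X − g(X,V)V − g(X,JV)JV)`; in particular `(JV)♭` is closed
(`g(∇_X JV, Y) − g(∇_Y JV, X) = 0`) and
`(L_{JV}g)(X,Y) = g(∇_X JV, Y) + g(∇_Y JV, X)
  = b(g(X,Y) − g(X,V)g(Y,V) − g(X,JV)g(Y,JV))`,
so `JV` is conformal Killing on the distribution orthogonal to `V, JV`. -/
theorem lck_parallel_field_nabla_JV
    {E : Type*} [NormedAddCommGroup E] [NormedSpace ℝ E]
    (g : E → E →L[ℝ] E →L[ℝ] ℝ) (hgdiff : Differentiable ℝ g)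
    (hsymm : ∀ x u v, g x u v = g x v u)
    (hpos : ∀ x u, u ≠ 0 → 0 < g x u u)
    (J : E → E →L[ℝ] E) (hJdiff : Differentiable ℝ J)
    (hJ2 : ∀ x v, J x (J x v) = -v)
    (hherm : ∀ x u v, g x (J x u) (J x v) = g x u v)
    (nab : (E → E) → (E → E) → E → E) (hLC : IsLeviCivita g nab)
    (θ : E → E →L[ℝ] ℝ) (hθdiff : Differentiable ℝ θ)
    (hθclosed : ∀ x u v : E,
      fderiv ℝ (fun y => θ y v) x u = fderiv ℝ (fun y => θ y u) x v)
    (θs : E → E) (hθs : ∀ x v, g x (θs x) v = θ x v)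
    (hlck : ∀ X Y : E → E, Differentiable ℝ X → Differentiable ℝ Y → ∀ x : E,
      nab X (fun y => J y (Y y)) x - J x (nab X Y x) = (1 / 2 : ℝ) •
        (g x (X x) (Y x) • J x (θs x) + θ x (J x (Y x)) • X x
          + g x (J x (X x)) (Y x) • θs x - θ x (Y x) • J x (X x)))
    (V : E → E) (hVdiff : Differentiable ℝ V)
    (hVpar : ∀ X : E → E, ∀ x : E, nab X V x = 0)
    (hVunit : ∀ x, g x (V x) (V x) = 1)
    (b : E → ℝ)
    (ha : ∀ x, θ x (V x) = 0)
    (hθb : ∀ x w, θ x w = b x * g x (J x (V x)) w) :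
    (∀ X : E → E, Differentiable ℝ X → ∀ x : E,
      nab X (fun y => J y (V y)) x = (b x / 2) •
        (X x - g x (X x) (V x) • V x - g x (X x) (J x (V x)) • J x (V x))) ∧
    (∀ X Y : E → E, Differentiable ℝ X → Differentiable ℝ Y → ∀ x : E,
      g x (nab X (fun y => J y (V y)) x) (Y x)
        - g x (nab Y (fun y => J y (V y)) x) (X x) = 0) ∧
    (∀ X Y : E → E, Differentiable ℝ X → Differentiable ℝ Y → ∀ x : E,
      g x (nab X (fun y => J y (V y)) x) (Y x)
        + g x (nab Y (fun y => J y (V y)) x) (X x)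
        = b x * (g x (X x) (Y x) - g x (X x) (V x) * g x (Y x) (V x)
            - g x (X x) (J x (V x)) * g x (Y x) (J x (V x)))) := by

  -- θs x = b x • J x (V x)
  have hθs_eq : ∀ x, θs x = b x • J x (V x) := by
    intro x
    by_contra hne
    have hsub : θs x - b x • J x (V x) ≠ 0 := sub_ne_zero.mpr hne
    have hzero : ∀ w, g x (θs x - b x • J x (V x)) w = 0 := by
      intro w
      simp only [map_sub, map_smul, ContinuousLinearMap.sub_apply,
        ContinuousLinearMap.smul_apply, smul_eq_mul, hθs, hθb]
      ring
    have := hpos x _ hsub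
    have h2 := hzero (θs x - b x • J x (V x))
    linarith
  have hJXV : ∀ x (u : E), g x (J x u) (V x) = - g x u (J x (V x)) := by
    intro x u
    have h := hherm x u (J x (V x))
    rw [hJ2] at h
    simp only [map_neg] at h
    linarith
  have hθJV : ∀ x, θ x (J x (V x)) = b x := by
    intro x
    rw [hθb]
    have := hherm x (V x) (V x)
    rw [hVunit] at this
    rw [this, mul_one]
  have hmain : ∀ X : E → E, Differentiable ℝ X → ∀ x : E,
      nab X (fun y => J y (V y)) x = (b x / 2) •
        (X x - g x (X x) (V x) • V x - g x (X x) (J x (V x)) • J x (V x)) := by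
    intro X hX x
    have h := hlck X V hX hVdiff x
    rw [hVpar X x, map_zero, sub_zero] at h
    rw [h, hθs_eq, ha, hθJV, map_smul, hJ2, hJXV]
    module
  refine ⟨hmain, ?_, ?_⟩
  · intro X Y hX hY x
    rw [hmain X hX x, hmain Y hY x]
    simp only [map_sub, map_smul, ContinuousLinearMap.sub_apply,
      ContinuousLinearMap.smul_apply, smul_eq_mul]
    rw [hsymm x (Y x) (X x), hsymm x (V x) (Y x), hsymm x (J x (V x)) (Y x),
      hsymm x (V x) (X x), hsymm x (J x (V x)) (X x)]
    ring
  · intro X Y hX hY x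
    rw [hmain X hX x, hmain Y hY x]
    simp only [map_sub, map_smul, ContinuousLinearMap.sub_apply,
      ContinuousLinearMap.smul_apply, smul_eq_mul]
    rw [hsymm x (Y x) (X x), hsymm x (V x) (Y x), hsymm x (J x (V x)) (Y x),
      hsymm x (V x) (X x), hsymm x (J x (V x)) (X x)]
    ring
end
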